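/- Let f : (i : Fin n) → ((∀ j, D j) → ℝ≥0) be the factors of a Bayesian network given in topological order with parent map pa. Let A ⊆ B ⊆ Fin n be Finsets that are both parent-closed, let F ⊆ A be a Finset of evidence variables with evidence assignment e : ∀ j, D j, let v ∈ A, let s : D v, and let x₀ : ∀ j, D j be a fixed reference assignment. Then the sum over all assignments y satisfying y v = s, y j = e j for all j ∈ F, and y j = x₀ j for all j ∉ B of ∏_{i ∈ B} f i y equals the sum over all assignments y satisfying y v = s, y j = e j for all j ∈ F, and y j = x₀ j for all j ∉ A of ∏_{i ∈ A} f i y. In particular, once all evidence variables lie in a parent-closed prefix, the (unnormalized) posterior marginal of any variable of that prefix is the same when computed from any larger parent-closed prefix. -/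

import Mathlib

/-- A factor `φ` is *local* to a set of variables `C` if it only depends on the
coordinates in `C`. -/
def IsLocal {n : ℕ} {D : Fin n → Type} (C : Finset (Fin n))
    (φ : (∀ j, D j) → NNReal) : Prop :=
  ∀ x y : ∀ j, D j, (∀ j ∈ C, x j = y j) → φ x = φ y

/-!
Let `m` be the largest variable of `B` outside `A`. No factor of `B` other than `f m` mentions
`m`: a factor of `A` only mentions variables of the parent-closed set `A`, and a factor `f i`
with `i ∈ B \ A`, `i ≠ m`, only mentions `i < m` and the parents of `i`, which precede `i`. Summing `m` out
therefore leaves the remaining factors untouched and turns `f m` into `1` by normalization of the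
CPD, so the sum over `B` equals the sum over `B \ {m}`; removing the variables of `B \ A` from
the top down reaches `A`.
-/

open Finset Function

section SumOut

variable {ι : Type*} [DecidableEq ι] {D : ι → Type*} [∀ i, Fintype (D i)]

/- The filters carry their own decidability instances so that the lemma also rewrites sums whose
instance is a specialised one, such as `Nat.decidableForallFin` when `ι = Fin n`. -/
theorem sum_filter_insert_eq_sum_sum_update [Fintype ι] {M : Type*} [AddCommMonoid M]
    (Q : (∀ j, D j) → Prop) {m : ι} (hQ : ∀ (y : ∀ j, D j) (t : D m), Q (update y m t) ↔ Q y)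
    (x₀ : ∀ j, D j) {B : Finset ι} (hm : m ∉ B)
    [DecidablePred fun y : ∀ j, D j => Q y ∧ ∀ j, j ∉ insert m B → y j = x₀ j]
    [DecidablePred fun y : ∀ j, D j => Q y ∧ ∀ j, j ∉ B → y j = x₀ j] (g : (∀ j, D j) → M) :
    ∑ y ∈ univ.filter (fun y => Q y ∧ ∀ j, j ∉ insert m B → y j = x₀ j), g y
      = ∑ z ∈ univ.filter (fun y => Q y ∧ ∀ j, j ∉ B → y j = x₀ j),
          ∑ t : D m, g (update z m t) := by
  rw [← sum_product']
  refine sum_nbij' (fun y => (update y m (x₀ m), y m)) (fun p => update p.1 m p.2)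
    ?_ ?_ ?_ ?_ (fun y _ => by simp)
  · intro y hy
    simp only [mem_product, mem_filter, mem_univ, true_and, and_true, mem_insert,
      not_or] at hy ⊢
    refine ⟨(hQ y _).2 hy.1, fun j hj => ?_⟩
    rcases eq_or_ne j m with rfl | hjm
    · simp
    · simpa [hjm] using hy.2 j ⟨hjm, hj⟩
  · rintro ⟨z, t⟩ hz
    simp only [mem_product, mem_filter, mem_univ, true_and, and_true, mem_insert,
      not_or] at hz ⊢
    exact ⟨(hQ z t).2 hz.1, fun j hj => by simpa [hj.1] using hz.2 j hj.2⟩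
  · intro y _
    simp
  · rintro ⟨z, t⟩ hz
    simp only [mem_product, mem_filter, mem_univ, true_and, and_true] at hz
    simp [← hz.2 m hm]

theorem sum_update_prod_insert {R : Type*} [CommSemiring R] (f : ι → (∀ j, D j) → R)
    {m : ι} {B : Finset ι} (hm : m ∉ B)
    (hnorm : ∀ x : ∀ j, D j, ∑ t : D m, f m (update x m t) = 1)
    (hindep : ∀ i ∈ B, ∀ (y : ∀ j, D j) (t : D m), f i (update y m t) = f i y)
    (z : ∀ j, D j) :
    ∑ t : D m, ∏ i ∈ insert m B, f i (update z m t) = ∏ i ∈ B, f i z := by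
  have hfactor : ∀ t : D m,
      ∏ i ∈ insert m B, f i (update z m t) = f m (update z m t) * ∏ i ∈ B, f i z := fun t => by
    rw [prod_insert hm, prod_congr rfl fun i hi => hindep i hi z t]
  simp only [hfactor, ← sum_mul, hnorm, one_mul]

end SumOut

theorem IsLocal.apply_update_of_notMem {n : ℕ} {D : Fin n → Type} {C : Finset (Fin n)}
    {φ : (∀ j, D j) → NNReal} (hφ : IsLocal C φ) {m : Fin n} (hm : m ∉ C) (y : ∀ j, D j)
    (t : D m) : φ (update y m t) = φ y :=
  hφ _ _ fun _ hj => update_of_ne (ne_of_mem_of_not_mem hj hm) t y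

theorem sum_filter_prod_union_eq_of_parentClosed {n : ℕ} {D : Fin n → Type}
    [∀ i, Fintype (D i)] [∀ i, DecidableEq (D i)]
    {pa : Fin n → Finset (Fin n)} (hpa : ∀ i : Fin n, ∀ j ∈ pa i, j < i)
    {f : ∀ _ : Fin n, (∀ j, D j) → NNReal}
    (hlocal : ∀ i : Fin n, IsLocal (insert i (pa i)) (f i))
    (hnorm : ∀ (x : ∀ j, D j) (i : Fin n), ∑ s : D i, f i (update x i s) = 1)
    {A : Finset (Fin n)} (hA : ∀ i ∈ A, pa i ⊆ A)
    (Q : (∀ j, D j) → Prop) [DecidablePred Q]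
    (hQ : ∀ y y' : ∀ j, D j, (∀ j ∈ A, y j = y' j) → (Q y ↔ Q y'))
    (x₀ : ∀ j, D j) (C : Finset (Fin n)) (hAC : Disjoint A C) :
    ∑ y ∈ univ.filter (fun y => Q y ∧ ∀ j, j ∉ A ∪ C → y j = x₀ j), ∏ i ∈ A ∪ C, f i y
      = ∑ y ∈ univ.filter (fun y => Q y ∧ ∀ j, j ∉ A → y j = x₀ j), ∏ i ∈ A, f i y := by
  induction C using Finset.induction_on_max with
  | empty => simp
  | insert m C hlt ih =>
    have hmA : m ∉ A := disjoint_right.1 hAC (mem_insert_self m C)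
    have hmAC : m ∉ A ∪ C := by
      simpa [hmA] using fun h => lt_irrefl m (hlt m h)
    have hm_notMem_scope : ∀ i ∈ A ∪ C, m ∉ insert i (pa i) := by
      intro i hi hmi
      rcases mem_insert.1 hmi with rfl | hpai
      · exact hmAC hi
      rcases mem_union.1 hi with hiA | hiC
      · exact hmA (hA i hiA hpai)
      · exact lt_asymm (hlt i hiC) (hpa i m hpai)
    have hQm : ∀ (y : ∀ j, D j) (t : D m), Q (update y m t) ↔ Q y := fun y t =>
      hQ _ _ fun j hj => update_of_ne (ne_of_mem_of_not_mem hj hmA) t y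
    rw [union_insert, sum_filter_insert_eq_sum_sum_update Q hQm x₀ hmAC,
      sum_congr rfl fun z _ => sum_update_prod_insert f hmAC (fun x => hnorm x m)
        (fun i hi => (hlocal i).apply_update_of_notMem (hm_notMem_scope i hi)) z]
    exact ih (disjoint_of_subset_right (subset_insert m C) hAC)

theorem bn_posterior_marginals_consistent_general
    (n : ℕ) (D : Fin n → Type) [∀ i, Fintype (D i)]
    [∀ i, DecidableEq (D i)]
    (pa : Fin n → Finset (Fin n)) (hpa : ∀ i : Fin n, ∀ j ∈ pa i, j < i)
    (f : ∀ _ : Fin n, (∀ j, D j) → NNReal)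
    (hlocal : ∀ i : Fin n, IsLocal (insert i (pa i)) (f i))
    (hnorm : ∀ (x : ∀ j, D j) (i : Fin n),
      ∑ s : D i, f i (Function.update x i s) = 1)
    (A B : Finset (Fin n)) (hAB : A ⊆ B)
    (hA : ∀ i ∈ A, pa i ⊆ A)
    (F : Finset (Fin n)) (hF : F ⊆ A) (e : ∀ j, D j)
    (v : Fin n) (hv : v ∈ A) (s : D v) (x₀ : ∀ j, D j) :
    ∑ y ∈ Finset.univ.filter
        (fun y : ∀ j, D j =>
          y v = s ∧ (∀ j ∈ F, y j = e j) ∧ ∀ j, j ∉ B → y j = x₀ j),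
      ∏ i ∈ B, f i y
      =
    ∑ y ∈ Finset.univ.filter
        (fun y : ∀ j, D j =>
          y v = s ∧ (∀ j ∈ F, y j = e j) ∧ ∀ j, j ∉ A → y j = x₀ j),
      ∏ i ∈ A, f i y := by
  have hevidence : ∀ y y' : ∀ j, D j, (∀ j ∈ A, y j = y' j) →
      ((y v = s ∧ ∀ j ∈ F, y j = e j) ↔ (y' v = s ∧ ∀ j ∈ F, y' j = e j)) := by
    intro y y' hyy'
    rw [hyy' v hv]
    exact and_congr_right' (forall₂_congr fun j hj => by rw [hyy' j (hF hj)])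
  have h := sum_filter_prod_union_eq_of_parentClosed hpa hlocal hnorm hA _ hevidence x₀
    (B \ A) disjoint_sdiff
  rw [union_sdiff_of_subset hAB] at h
  simpa only [and_assoc] using h

/-- For a Bayesian network given in topological order, once all evidence variables
`F` lie in a parent-closed prefix `A`, the (unnormalized) posterior marginal of any
variable `v` of `A` is the same when computed from any larger parent-closed
prefix `B`. -/
theorem bn_posterior_marginals_consistent
    (n : ℕ) (D : Fin n → Type) [∀ i, Fintype (D i)] [∀ i, Nonempty (D i)]
    [∀ i, DecidableEq (D i)]
    (pa : Fin n → Finset (Fin n)) (hpa : ∀ i : Fin n, ∀ j ∈ pa i, j < i)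
    (f : ∀ _ : Fin n, (∀ j, D j) → NNReal)
    (hlocal : ∀ i : Fin n, IsLocal (insert i (pa i)) (f i))
    (hnorm : ∀ (x : ∀ j, D j) (i : Fin n),
      ∑ s : D i, f i (Function.update x i s) = 1)
    (A B : Finset (Fin n)) (hAB : A ⊆ B)
    (hA : ∀ i ∈ A, pa i ⊆ A) (hB : ∀ i ∈ B, pa i ⊆ B)
    (F : Finset (Fin n)) (hF : F ⊆ A) (e : ∀ j, D j)
    (v : Fin n) (hv : v ∈ A) (s : D v) (x₀ : ∀ j, D j) :
    ∑ y ∈ Finset.univ.filter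
        (fun y : ∀ j, D j =>
          y v = s ∧ (∀ j ∈ F, y j = e j) ∧ ∀ j, j ∉ B → y j = x₀ j),
      ∏ i ∈ B, f i y
      =
    ∑ y ∈ Finset.univ.filter
        (fun y : ∀ j, D j =>
          y v = s ∧ (∀ j ∈ F, y j = e j) ∧ ∀ j, j ∉ A → y j = x₀ j),
      ∏ i ∈ A, f i y :=
  bn_posterior_marginals_consistent_general n D pa hpa f hlocal hnorm A B hAB hA F hF e v hv s x₀
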